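/- Let A be a type with decidable equality, B a type, and T : Set (List (A × B)) downward prime. Then EMPCF(A, B, T) implies GDC(A, B, T). -/

import Mathlib

/-!
A set in `⟨T⟩` stays in `⟨T⟩` after adding a pair `p` with `[p] ∈ T`, because `T` is downward
prime and every list is the concatenation of its singletons. Approximability provides such a pair
`(a, b)` for every `a`, so a dpf-maximal `f` in `⟨T⟩` (given by EMPCF, as `∅ ∈ ⟨T⟩`) is total,
and `a ↦ (f a).get` is a choice function.
-/

namespace Paper

universe u v

/-- `listSub u α` : every element of the list `u` belongs to `α` (written `u ⊂ α`). -/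
def listSub {A : Type u} (u : List A) (α : Set A) : Prop := ∀ a ∈ u, a ∈ α

/-- `⟨T⟩` : the sets all of whose finite sublists are in `T`. -/
def eng {A : Type u} (T : Set (List A)) : Set (Set A) :=
  {α | ∀ l : List A, listSub l α → l ∈ T}

/-- `⟨T⟩∃` : the sets having some finite sublist in `T`. -/
def engE {A : Type u} (T : Set (List A)) : Set (Set A) :=
  {α | ∃ l : List A, listSub l α ∧ l ∈ T}

/-- `û` : the set of elements of the list `u`. -/
def hat {A : Type u} (l : List A) : Set A := {a | a ∈ l}

/-- `⌊P⌋` : the lists whose set of elements is in `P`. -/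
def res {A : Type u} (P : Set (Set A)) : Set (List A) := {l | hat l ∈ P}

/-- Domain of a decidable partial function. -/
def ddom {A : Type u} {B : Type v} (f : A → Option B) : Set A := {a | f a ≠ none}

/-- Graph of a decidable partial function. -/
def dgraph {A : Type u} {B : Type v} (f : A → Option B) : Set (A × B) :=
  {p | f p.1 = some p.2}

/-- `g ≺ f` for decidable partial functions: `g` extends `f` by one new point. -/
def dext {A : Type u} {B : Type v} (g f : A → Option B) : Prop :=
  ∃ a, a ∉ ddom f ∧ ddom g = ddom f ∪ {a} ∧ ∀ x ∈ ddom f, f x = g x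

/-- `f` is dpf-maximal in `P`. -/
def MaxDPF {A : Type u} {B : Type v} (P : Set (Set (A × B))) (f : A → Option B) : Prop :=
  dgraph f ∈ P ∧ ∀ g : A → Option B, dext g f → dgraph g ∉ P

/-- `EMPCF(A,B,T)` : existence of a maximal decidable partial choice function. -/
def EMPCF {A : Type u} {B : Type v} (T : Set (List (A × B))) : Prop :=
  (∃ α : Set (A × B), α ∈ eng T) → ∃ f : A → Option B, MaxDPF (eng T) f

/-- The operator `φ` used to define `A`-`B`-approximability. -/
def phi {A : Type u} {B : Type v} (T X : Set (List (A × B))) : Set (List (A × B)) :=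
  {l | l ∈ res (eng T) ∧ ∀ a : A, (¬ ∃ b, (a, b) ∈ l) → ∃ b, l ++ [(a, b)] ∈ X}

/-- `T` is `A`-`B`-approximable: `[]` is in the greatest fixed point of `φ`,
equivalently there is a `φ`-dense set containing `[]`. -/
def Approximable {A : Type u} {B : Type v} (T : Set (List (A × B))) : Prop :=
  ∃ X : Set (List (A × B)), X ⊆ phi T X ∧ [] ∈ X

/-- `T` has an `A`-`B`-choice function. -/
def HasChoiceFun {A : Type u} {B : Type v} (T : Set (List (A × B))) : Prop :=
  ∃ f : A → B, ∀ l : List (A × B), listSub l {p : A × B | f p.1 = p.2} → l ∈ T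

/-- Generalised dependent choice. -/
def GDC {A : Type u} {B : Type v} (T : Set (List (A × B))) : Prop :=
  Approximable T → HasChoiceFun T

/-- `T` is downward prime. -/
def DownwardPrime {A : Type u} {B : Type v} (T : Set (List (A × B))) : Prop :=
  ∀ l v : List (A × B), l ∈ T → v ∈ T → l ++ v ∈ T


section Approximable

variable {A : Type u} {B : Type v} {T : Set (List (A × B))}

theorem Approximable.empty_mem_eng (hT : Approximable T) : ∅ ∈ eng T := by
  obtain ⟨X, hX, hnil⟩ := hT
  simpa [res, hat] using (hX hnil).1

theorem Approximable.exists_singleton_mem (hT : Approximable T) (a : A) :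
    ∃ b, [(a, b)] ∈ T := by
  obtain ⟨X, hX, hnil⟩ := hT
  obtain ⟨b, hb⟩ := (hX hnil).2 a (by simp)
  exact ⟨b, (hX hb).1 _ fun _ hp => hp⟩

end Approximable

theorem insert_mem_eng {A : Type u} {B : Type v} {T : Set (List (A × B))}
    (hT : DownwardPrime T) {α : Set (A × B)} (hα : α ∈ eng T) {p : A × B} (hp : [p] ∈ T) :
    insert p α ∈ eng T := by
  intro l hl
  induction l with
  | nil => exact hα [] (by simp [listSub])
  | cons q l ih =>
    have hq : [q] ∈ T := by
      rcases hl q List.mem_cons_self with rfl | hqα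
      · exact hp
      · exact hα [q] (by simpa [listSub] using hqα)
    exact hT [q] l hq (ih fun r hr => hl r (List.mem_cons_of_mem q hr))

section DecidablePartialFunction

variable {A : Type u} {B : Type v} [DecidableEq A] {f : A → Option B} {a : A}

theorem dgraph_update_of_eq_none (ha : f a = none) (b : B) :
    dgraph (Function.update f a (some b)) = insert (a, b) (dgraph f) := by
  ext ⟨x, y⟩
  by_cases hx : x = a
  · subst hx
    simp [dgraph, ha, eq_comm]
  · simp [dgraph, hx]

theorem dext_update_of_eq_none (ha : f a = none) (b : B) :
    dext (Function.update f a (some b)) f := by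
  have ha' : a ∉ ddom f := fun h => h ha
  refine ⟨a, ha', ?_, fun x hx => ?_⟩
  · ext x
    by_cases hx : x = a
    · subst hx
      simp [ddom]
    · simp [ddom, hx]
  · rw [Function.update_of_ne (ne_of_mem_of_not_mem hx ha')]

end DecidablePartialFunction

theorem MaxDPF.ne_none {A : Type u} {B : Type v} [DecidableEq A] {T : Set (List (A × B))}
    (hT : DownwardPrime T) {f : A → Option B} (hf : MaxDPF (eng T) f) {a : A} {b : B}
    (hb : [(a, b)] ∈ T) : f a ≠ none := by
  intro ha
  apply hf.2 _ (dext_update_of_eq_none ha b)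
  rw [dgraph_update_of_eq_none ha b]
  exact insert_mem_eng hT hf.1 hb

theorem hasChoiceFun_of_dgraph_mem_eng {A : Type u} {B : Type v} {T : Set (List (A × B))}
    {f : A → Option B} (hf : dgraph f ∈ eng T) (htot : ∀ a, f a ≠ none) : HasChoiceFun T := by
  refine ⟨fun a => (f a).get (Option.ne_none_iff_isSome.mp (htot a)), fun l hl => hf l ?_⟩
  intro p hp
  have hfp : (f p.1).get _ = p.2 := hl p hp
  simp [dgraph, ← hfp]

/-- for `T` downward prime and `A` with decidable equality,
`EMPCF(A, B, T)` implies `GDC(A, B, T)`. -/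
theorem EMPCF_implies_GDC_downwardPrime (A : Type u) (B : Type v)
    [DecidableEq A] (T : Set (List (A × B))) (hT : DownwardPrime T) :
    EMPCF T → GDC T := by
  intro hE happ
  obtain ⟨f, hf⟩ := hE ⟨∅, happ.empty_mem_eng⟩
  refine hasChoiceFun_of_dgraph_mem_eng hf.1 fun a => ?_
  obtain ⟨b, hb⟩ := happ.exists_singleton_mem a
  exact hf.ne_none hT hb

end Paper
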